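/- Let r ≥ 2 be a real number, a ≥ 0, and define the Fenchel conjugate φ_a*(u) = sup_{t ≥ 0} ( u·t − φ_a(t) ) for u ≥ 0, where φ_a(t) = ∫_0^t (a+s)^{r−2} s ds. Then for all u ≥ 0: φ_a*(2u) ≤ 4 φ_a*(u). In particular the Δ₂ constant of φ_a* is bounded by 4 uniformly in a. -/

import Mathlib

/-!
Substituting `s ↦ 2s` gives `φ_a(2t) = 4 ∫_0^t (a+2s)^{r-2} s ds ≥ 4 φ_a(t)`, since `(a+s)^{r-2}`
is nondecreasing for `r ≥ 2`. Hence `2u·2t − φ_a(2t) ≤ 4 (u t − φ_a(t))`, and taking the supremum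
over `t ≥ 0` gives `φ_a*(2u) ≤ 4 φ_a*(u)`.
-/

open MeasureTheory

/-- The shifted function `φ_a(t) = ∫_0^t (a+s)^{r−2} s ds`. -/
noncomputable def phi (r a t : ℝ) : ℝ := ∫ s in (0 : ℝ)..t, (a + s) ^ (r - 2) * s

/-- The Fenchel conjugate `φ_a*(u) = sup_{t ≥ 0} (u t − φ_a(t))`. -/
noncomputable def phiStar (r a u : ℝ) : ℝ :=
  sSup {y : ℝ | ∃ t : ℝ, 0 ≤ t ∧ y = u * t - phi r a t}

/-- `sup_{t ≥ 0} (u t − f t)`, with the junk value `0` when the supremum is infinite;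
`phiStar r a` is `conjugateOnNonneg (phi r a)` by definition. -/
noncomputable def conjugateOnNonneg (f : ℝ → ℝ) (u : ℝ) : ℝ :=
  sSup {y : ℝ | ∃ t : ℝ, 0 ≤ t ∧ y = u * t - f t}

theorem conjugateOnNonneg_two_mul_le {f : ℝ → ℝ} (hf : ∀ t, 0 ≤ t → 4 * f t ≤ f (2 * t))
    {u : ℝ} (hu : 0 ≤ u) : conjugateOnNonneg f (2 * u) ≤ 4 * conjugateOnNonneg f u := by
  unfold conjugateOnNonneg
  set S := {y : ℝ | ∃ t : ℝ, 0 ≤ t ∧ y = u * t - f t}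
  set S₂ := {y : ℝ | ∃ t : ℝ, 0 ≤ t ∧ y = 2 * u * t - f t}
  by_cases hS : BddAbove S
  · refine csSup_le ⟨_, 0, le_rfl, rfl⟩ ?_
    rintro _ ⟨t, ht, rfl⟩
    have hdouble : 4 * f (t / 2) ≤ f t := by
      simpa [mul_div_cancel₀] using hf (t / 2) (by linarith)
    calc 2 * u * t - f t ≤ 4 * (u * (t / 2) - f (t / 2)) := by linarith
      _ ≤ 4 * sSup S := by gcongr; exact le_csSup hS ⟨t / 2, by linarith, rfl⟩
  · -- As `u ≥ 0`, both suprema are infinite and both sides are the junk value `0`.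
    have hS₂ : ¬ BddAbove S₂ := by
      rintro ⟨M, hM⟩
      refine hS ⟨M, ?_⟩
      rintro _ ⟨t, ht, rfl⟩
      have := hM ⟨t, ht, rfl⟩
      nlinarith
    simp [Real.sSup_of_not_bddAbove hS, Real.sSup_of_not_bddAbove hS₂]

theorem phi_two_mul (r a t : ℝ) :
    phi r a (2 * t) = 4 * ∫ s in (0 : ℝ)..t, (a + 2 * s) ^ (r - 2) * s := by
  have hsubst := intervalIntegral.integral_comp_mul_left
    (fun s : ℝ => (a + s) ^ (r - 2) * s) (a := 0) (b := t) (c := 2) two_ne_zero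
  rw [mul_zero] at hsubst
  calc phi r a (2 * t) = 2 * ∫ s in (0 : ℝ)..t, (a + 2 * s) ^ (r - 2) * (2 * s) := by
        rw [hsubst, smul_eq_mul, mul_inv_cancel_left₀ two_ne_zero, phi]
    _ = 4 * ∫ s in (0 : ℝ)..t, (a + 2 * s) ^ (r - 2) * s := by
        rw [← intervalIntegral.integral_const_mul, ← intervalIntegral.integral_const_mul]
        exact intervalIntegral.integral_congr fun s _ => by ring

theorem four_mul_phi_le_phi_two_mul {r a t : ℝ} (hr : 2 ≤ r) (ha : 0 ≤ a) (ht : 0 ≤ t) :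
    4 * phi r a t ≤ phi r a (2 * t) := by
  have hcont (c : ℝ) : Continuous fun s : ℝ => (a + c * s) ^ (r - 2) * s :=
    ((continuous_const.add (continuous_const_mul c)).rpow_const fun _ => Or.inr (by linarith)).mul
      continuous_id
  rw [phi_two_mul, phi]
  gcongr
  refine intervalIntegral.integral_mono_on ht ?_ ((hcont 2).intervalIntegrable _ _) fun s hs => ?_
  · simpa using (hcont 1).intervalIntegrable 0 t
  · exact mul_le_mul_of_nonneg_right
      (Real.rpow_le_rpow (by linarith [hs.1]) (by linarith [hs.1]) (by linarith)) hs.1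

/-- Doubling (Δ₂) bound for the Fenchel conjugates of the shifted functions,
uniform in the shift `a`: for `r ≥ 2`, `φ_a*(2u) ≤ 4 φ_a*(u)` for all
`a ≥ 0` and `u ≥ 0`. -/
theorem phiStar_doubling
    (r : ℝ) (hr : 2 ≤ r) (a : ℝ) (ha : 0 ≤ a) :
    ∀ u : ℝ, 0 ≤ u → phiStar r a (2 * u) ≤ 4 * phiStar r a u :=
  fun _ hu =>
    conjugateOnNonneg_two_mul_le (fun t ht => four_mul_phi_le_phi_two_mul (t := t) hr ha ht) hu
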